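/- Let g : (0, π) → ℝ be continuous, g < 0 on (0, π), and let v : [0, π] → ℝ be C¹ with v(0) = v(π) = 0, v > 0 on (0, π), and suppose v(x)v'(x) = g(x)·w(x) for a continuous function w : (0, π) → ℝ. If w > 0 on all of (0, π) then a contradiction arises; likewise if w < 0 on all of (0, π). Hence w vanishes somewhere on (0, π). -/

import Mathlib

/-!
By the mean value theorem `v` rises somewhere on `(0, π/2)` and falls somewhere on `(π/2, π)`.
As `v > 0` and `g < 0`, the relation `v v' = g w` gives `w` the sign opposite to `v'`, so `w` takes
both signs and vanishes in between by the intermediate value theorem.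
-/

open Set

section MeanValue

variable {v v' : ℝ → ℝ} {a b : ℝ}

theorem exists_deriv_pos_of_lt (hab : a < b) (hv : ContinuousOn v (Icc a b))
    (hv' : ∀ x ∈ Ioo a b, HasDerivAt v (v' x) x) (h : v a < v b) :
    ∃ c ∈ Ioo a b, 0 < v' c := by
  obtain ⟨c, hc, hslope⟩ := exists_hasDerivAt_eq_slope v v' hab hv hv'
  exact ⟨c, hc, hslope ▸ div_pos (sub_pos.2 h) (sub_pos.2 hab)⟩

theorem exists_deriv_neg_of_lt (hab : a < b) (hv : ContinuousOn v (Icc a b))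
    (hv' : ∀ x ∈ Ioo a b, HasDerivAt v (v' x) x) (h : v b < v a) :
    ∃ c ∈ Ioo a b, v' c < 0 := by
  obtain ⟨c, hc, hslope⟩ := exists_hasDerivAt_eq_slope v v' hab hv hv'
  exact ⟨c, hc, hslope ▸ div_neg_of_neg_of_pos (sub_neg.2 h) (sub_pos.2 hab)⟩

theorem exists_deriv_pos_and_exists_deriv_neg {m : ℝ} (hm : m ∈ Ioo a b)
    (hv : ContinuousOn v (Icc a b)) (hv' : ∀ x ∈ Ioo a b, HasDerivAt v (v' x) x)
    (ha : v a < v m) (hb : v b < v m) :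
    (∃ c ∈ Ioo a b, 0 < v' c) ∧ ∃ d ∈ Ioo a b, v' d < 0 := by
  obtain ⟨c, hc, hc'⟩ := exists_deriv_pos_of_lt hm.1 (hv.mono (Icc_subset_Icc_right hm.2.le))
    (fun x hx => hv' x ⟨hx.1, hx.2.trans hm.2⟩) ha
  obtain ⟨d, hd, hd'⟩ := exists_deriv_neg_of_lt hm.2 (hv.mono (Icc_subset_Icc_left hm.1.le))
    (fun x hx => hv' x ⟨hm.1.trans hx.1, hx.2⟩) hb
  exact ⟨⟨c, ⟨hc.1, hc.2.trans hm.2⟩, hc'⟩, ⟨d, ⟨hm.1.trans hd.1, hd.2⟩, hd'⟩⟩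

end MeanValue

theorem stmt17_general (g w v v' : ℝ → ℝ)
    (hgneg : ∀ x ∈ Ioo 0 Real.pi, g x < 0)
    (hvcont : ContinuousOn v (Icc 0 Real.pi))
    (hv' : ∀ x ∈ Ioo 0 Real.pi, HasDerivAt v (v' x) x)
    (h0 : v 0 = 0) (hπ : v Real.pi = 0)
    (hpos : ∀ x ∈ Ioo 0 Real.pi, 0 < v x)
    (hwcont : ContinuousOn w (Ioo 0 Real.pi))
    (hrel : ∀ x ∈ Ioo 0 Real.pi, v x * v' x = g x * w x) :
    (¬ ∀ x ∈ Ioo 0 Real.pi, 0 < w x) ∧ (¬ ∀ x ∈ Ioo 0 Real.pi, w x < 0) ∧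
      ∃ x ∈ Ioo 0 Real.pi, w x = 0 := by
  have hmid : Real.pi / 2 ∈ Ioo 0 Real.pi := ⟨by positivity, by linarith [Real.pi_pos]⟩
  obtain ⟨⟨c, hc, hv'c⟩, ⟨d, hd, hv'd⟩⟩ :=
    exists_deriv_pos_and_exists_deriv_neg hmid hvcont hv'
      (by rw [h0]; exact hpos _ hmid) (by rw [hπ]; exact hpos _ hmid)
  have hwc : w c < 0 :=
    neg_of_mul_pos_right (hrel c hc ▸ mul_pos (hpos c hc) hv'c) (hgneg c hc).le
  have hwd : 0 < w d :=
    pos_of_mul_neg_right (hrel d hd ▸ mul_neg_of_pos_of_neg (hpos d hd) hv'd) (hgneg d hd).le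
  refine ⟨fun h => (h c hc).not_gt hwc, fun h => (h d hd).not_gt hwd, ?_⟩
  obtain ⟨x, hx, hwx⟩ := isPreconnected_Ioo.intermediate_value hc hd hwcont ⟨hwc.le, hwd.le⟩
  exact ⟨x, hx, hwx⟩

/-- abstract inflection-point existence: if v·v' = g·w with
g < 0, v(0)=v(π)=0, v > 0 inside, then w cannot have a constant sign, and
w vanishes somewhere on (0,π). -/
theorem stmt17 (g w v v' : ℝ → ℝ)
    (hgcont : ContinuousOn g (Ioo 0 Real.pi))
    (hgneg : ∀ x ∈ Ioo 0 Real.pi, g x < 0)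
    (hvcont : ContinuousOn v (Icc 0 Real.pi))
    (hv' : ∀ x ∈ Ioo 0 Real.pi, HasDerivAt v (v' x) x)
    (h0 : v 0 = 0) (hπ : v Real.pi = 0)
    (hpos : ∀ x ∈ Ioo 0 Real.pi, 0 < v x)
    (hwcont : ContinuousOn w (Ioo 0 Real.pi))
    (hrel : ∀ x ∈ Ioo 0 Real.pi, v x * v' x = g x * w x) :
    (¬ ∀ x ∈ Ioo 0 Real.pi, 0 < w x) ∧ (¬ ∀ x ∈ Ioo 0 Real.pi, w x < 0) ∧
      ∃ x ∈ Ioo 0 Real.pi, w x = 0 :=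
  stmt17_general g w v v' hgneg hvcont hv' h0 hπ hpos hwcont hrel
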